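/- arXiv:1103.4629 — 2 statements merged into one kernel-verified Lean document; each statement's English description precedes it below -/
import Mathlib

section
/- For a signed graph Σ on n vertices, λ_max(L(Σ)) ≥ n^{−1/3}·(4·∑_{j=1}^n d_j(d_j^-)² − 8·∑_{e_{ij}∈E} σ(e_{ij}) d_i^- d_j^-)^{1/3}. -/
open Matrix BigOperators

noncomputable section

/-- Signed adjacency matrix. -/
def adjMat (n : ℕ) (G : SimpleGraph (Fin n)) [DecidableRel G.Adj]
    (s : Fin n → Fin n → ℝ) : Matrix (Fin n) (Fin n) ℝ :=
  fun i j => if G.Adj i j then s i j else 0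

/-- Laplacian matrix of a signed graph: L = D - A. -/
def lapMat (n : ℕ) (G : SimpleGraph (Fin n)) [DecidableRel G.Adj]
    (s : Fin n → Fin n → ℝ) : Matrix (Fin n) (Fin n) ℝ :=
  Matrix.diagonal (fun i => (G.degree i : ℝ)) - adjMat n G s

/-- Number of negative edges incident to vertex `j`. -/
def dNeg (n : ℕ) (G : SimpleGraph (Fin n)) (s : Fin n → Fin n → ℝ) (j : Fin n) : ℕ :=
  Nat.card {i : Fin n // G.Adj j i ∧ s j i = -1}

/-- Number of positive edges incident to vertex `j`. -/
def dPos (n : ℕ) (G : SimpleGraph (Fin n)) (s : Fin n → Fin n → ℝ) (j : Fin n) : ℕ :=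
  Nat.card {i : Fin n // G.Adj j i ∧ s j i = 1}

/-- Sum of `f i j` over the edges `{v_i, v_j}` of the graph (each unordered edge counted once). -/
def edgeSum (n : ℕ) (G : SimpleGraph (Fin n)) [DecidableRel G.Adj]
    (f : Fin n → Fin n → ℝ) : ℝ :=
  (∑ i, ∑ j, if G.Adj i j then f i j else 0) / 2

/-- `t^±(Σ)`: number of positive triangles minus number of negative triangles. -/
def tPM (n : ℕ) (G : SimpleGraph (Fin n)) [DecidableRel G.Adj]
    (s : Fin n → Fin n → ℝ) : ℝ :=
  (∑ i, ∑ j, ∑ k, if G.Adj i j ∧ G.Adj j k ∧ G.Adj k i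
    then s i j * s j k * s k i else 0) / 6

/-- Number of balanced connected components: components that can be switched all-positive. -/
def numBalanced (n : ℕ) (G : SimpleGraph (Fin n)) (s : Fin n → Fin n → ℝ) : ℕ :=
  Nat.card {c : G.ConnectedComponent //
    ∃ θ : Fin n → ℝ, (∀ v, θ v = 1 ∨ θ v = -1) ∧
      ∀ i j, G.Adj i j → G.connectedComponentMk i = c → s i j = θ i * θ j}
variable {n : ℕ} {G : SimpleGraph (Fin n)} [DecidableRel G.Adj] {s : Fin n → Fin n → ℝ}

lemma dNeg_card (j : Fin n) :
    dNeg n G s j = (Finset.univ.filter (fun i => G.Adj j i ∧ s j i = -1)).card := by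
  rw [dNeg, Nat.card_eq_fintype_card, Fintype.card_subtype]

lemma deg_card (j : Fin n) :
    G.degree j = (Finset.univ.filter (fun i => G.Adj j i)).card := by
  rw [← SimpleGraph.neighborFinset_eq_filter]; rfl

lemma sum_signs (hsgn : ∀ i j, G.Adj i j → s i j = 1 ∨ s i j = -1) (j : Fin n) :
    ∑ k, (if G.Adj j k then s j k else 0) =
      (G.degree j : ℝ) - 2 * (dNeg n G s j : ℝ) := by
  classical
  have hsplit : (Finset.univ.filter (fun i => G.Adj j i))
      = (Finset.univ.filter (fun i => G.Adj j i ∧ s j i = 1))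
        ∪ (Finset.univ.filter (fun i => G.Adj j i ∧ s j i = -1)) := by
    ext k
    simp only [Finset.mem_filter, Finset.mem_union, Finset.mem_univ, true_and]
    constructor
    · intro h; rcases hsgn j k h with h1 | h1
      · exact Or.inl ⟨h, h1⟩
      · exact Or.inr ⟨h, h1⟩
    · rintro (⟨h, _⟩ | ⟨h, _⟩) <;> exact h
  have hdisj : Disjoint (Finset.univ.filter (fun i => G.Adj j i ∧ s j i = 1))
      (Finset.univ.filter (fun i => G.Adj j i ∧ s j i = -1)) := by
    rw [Finset.disjoint_filter]
    rintro k _ ⟨_, h1⟩ ⟨_, h2⟩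
    rw [h1] at h2; norm_num at h2
  rw [← Finset.sum_filter, hsplit, Finset.sum_union hdisj]
  have h1 : ∑ k ∈ Finset.univ.filter (fun i => G.Adj j i ∧ s j i = 1), s j k
      = ((Finset.univ.filter (fun i => G.Adj j i ∧ s j i = 1)).card : ℝ) := by
    rw [Finset.sum_congr rfl (fun k hk => (Finset.mem_filter.mp hk).2.2)]
    simp
  have h2 : ∑ k ∈ Finset.univ.filter (fun i => G.Adj j i ∧ s j i = -1), s j k
      = -((Finset.univ.filter (fun i => G.Adj j i ∧ s j i = -1)).card : ℝ) := by
    rw [Finset.sum_congr rfl (fun k hk => (Finset.mem_filter.mp hk).2.2)]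
    simp
  have hdeg : (G.degree j : ℝ)
      = ((Finset.univ.filter (fun i => G.Adj j i ∧ s j i = 1)).card : ℝ)
        + ((Finset.univ.filter (fun i => G.Adj j i ∧ s j i = -1)).card : ℝ) := by
    rw [deg_card, hsplit, Finset.card_union_of_disjoint hdisj]; push_cast; ring
  rw [h1, h2, hdeg, dNeg_card]; push_cast; ring

lemma lap_mulVec_ones (hsgn : ∀ i j, G.Adj i j → s i j = 1 ∨ s i j = -1) (j : Fin n) :
    (lapMat n G s *ᵥ (fun _ => (1:ℝ))) j = 2 * (dNeg n G s j : ℝ) := by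
  have : (lapMat n G s *ᵥ (fun _ => (1:ℝ))) j = ∑ k, lapMat n G s j k := by
    simp [mulVec, dotProduct]
  rw [this]
  have : ∑ k, lapMat n G s j k
      = (G.degree j : ℝ) - ∑ k, (if G.Adj j k then s j k else 0) := by
    simp [lapMat, adjMat, Finset.sum_sub_distrib, Matrix.diagonal]
  rw [this, sum_signs hsgn]; ring

lemma quad_form (x : Fin n → ℝ) :
    x ⬝ᵥ (lapMat n G s *ᵥ x)
      = ∑ j, (G.degree j : ℝ) * x j ^ 2
        - ∑ i, ∑ j, (if G.Adj i j then s i j * x i * x j else 0) := by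
  simp only [dotProduct, mulVec, lapMat, adjMat, Matrix.sub_apply, Matrix.diagonal]
  rw [← Finset.sum_sub_distrib]
  congr 1; ext i
  have key : ∀ j, x i * ((Matrix.of (fun a b => if a = b then (G.degree a : ℝ) else 0) i j
        - if G.Adj i j then s i j else 0) * x j)
      = (if i = j then (G.degree i : ℝ) * x i ^ 2 else 0)
        - (if G.Adj i j then s i j * x i * x j else 0) := by
    intro j
    by_cases h : i = j <;> by_cases h2 : G.Adj i j <;>
      simp [Matrix.of_apply, h, h2] <;> first | (subst h; ring) | ring
  rw [Finset.mul_sum, Finset.sum_congr rfl (fun j _ => key j), Finset.sum_sub_distrib]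
  simp

lemma sum_ite_adj (i : Fin n) (c : ℝ) :
    ∑ j, (if G.Adj i j then c else 0) = (G.degree i : ℝ) * c := by
  rw [← Finset.sum_filter, Finset.sum_const, deg_card]
  simp [nsmul_eq_mul]

lemma two_quad (hsgn : ∀ i j, G.Adj i j → s i j = 1 ∨ s i j = -1) (x : Fin n → ℝ) :
    2 * (x ⬝ᵥ (lapMat n G s *ᵥ x))
      = ∑ i, ∑ j, (if G.Adj i j then (x i - s i j * x j) ^ 2 else 0) := by
  rw [quad_form]
  have e1 : ∀ i j, (if G.Adj i j then (x i - s i j * x j) ^ 2 else 0)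
      = (if G.Adj i j then x i ^ 2 else 0) + (if G.Adj i j then x j ^ 2 else 0)
        - 2 * (if G.Adj i j then s i j * x i * x j else 0) := by
    intro i j; by_cases h : G.Adj i j
    · simp only [if_pos h]
      rcases hsgn i j h with h1 | h1 <;> rw [h1] <;> ring
    · simp [h]
  have hA : ∑ i, ∑ j, (if G.Adj i j then x i ^ 2 else 0)
      = ∑ i, (G.degree i : ℝ) * x i ^ 2 :=
    Finset.sum_congr rfl fun i _ => sum_ite_adj i _
  have hB : ∑ i, ∑ j, (if G.Adj i j then x j ^ 2 else 0)
      = ∑ j, (G.degree j : ℝ) * x j ^ 2 := by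
    rw [Finset.sum_comm]
    refine Finset.sum_congr rfl fun j _ => ?_
    have : ∀ i, (if G.Adj i j then x j ^ 2 else 0) = (if G.Adj j i then x j ^ 2 else 0) :=
      fun i => if_congr (G.adj_comm i j) rfl rfl
    rw [Finset.sum_congr rfl fun i _ => this i]
    exact sum_ite_adj j _
  simp only [e1, Finset.sum_add_distrib, Finset.sum_sub_distrib, ← Finset.mul_sum]
  rw [hA, hB]; ring

lemma lap_posSemidef (hsgn : ∀ i j, G.Adj i j → s i j = 1 ∨ s i j = -1)
    (hL : (lapMat n G s).IsHermitian) : (lapMat n G s).PosSemidef := by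
  refine Matrix.PosSemidef.of_dotProduct_mulVec_nonneg hL fun x => ?_
  rw [star_trivial]
  have h := two_quad hsgn x
  have hpos : 0 ≤ ∑ i, ∑ j, (if G.Adj i j then (x i - s i j * x j) ^ 2 else 0) := by
    refine Finset.sum_nonneg fun i _ => Finset.sum_nonneg fun j _ => ?_
    by_cases hadj : G.Adj i j <;> simp [hadj] <;> positivity
  linarith

lemma spectral_cube_bound {m : ℕ} (hm : 0 < m) (A : Matrix (Fin m) (Fin m) ℝ)
    (hA : A.IsHermitian) (hP : A.PosSemidef) :
    (fun _ => (1:ℝ)) ⬝ᵥ (A ^ 3 *ᵥ (fun _ => (1:ℝ)))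
      ≤ (m : ℝ) * (⨆ i, hA.eigenvalues i) ^ 3 := by
  classical
  have : Nonempty (Fin m) := ⟨⟨0, hm⟩⟩
  set o : Fin m → ℝ := fun _ => 1 with ho
  set V : Matrix (Fin m) (Fin m) ℝ := (Matrix.IsHermitian.eigenvectorUnitary hA : Matrix (Fin m) (Fin m) ℝ) with hVdef
  have hV1 : V * star V = 1 := Matrix.mem_unitaryGroup_iff.mp (Matrix.IsHermitian.eigenvectorUnitary hA).2
  have hV2 : star V * V = 1 := Matrix.mem_unitaryGroup_iff'.mp (Matrix.IsHermitian.eigenvectorUnitary hA).2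
  have hsp : A = V * Matrix.diagonal hA.eigenvalues * star V := by
    have h := hA.spectral_theorem
    have : (RCLike.ofReal ∘ hA.eigenvalues : Fin m → ℝ) = hA.eigenvalues := funext fun i => rfl
    rwa [this] at h
  have key : ∀ B C : Matrix (Fin m) (Fin m) ℝ,
      (V * B * star V) * (V * C * star V) = V * (B * C) * star V := by
    intro B C
    calc (V * B * star V) * (V * C * star V)
        = V * (B * ((star V * V) * (C * star V))) := by simp only [Matrix.mul_assoc]
      _ = V * (B * C) * star V := by rw [hV2, Matrix.one_mul]; simp only [Matrix.mul_assoc]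
  have hA3 : A ^ 3 = V * Matrix.diagonal (fun i => hA.eigenvalues i ^ 3) * star V := by
    conv_lhs => rw [pow_succ, pow_two, hsp]
    rw [key, key, Matrix.diagonal_mul_diagonal, Matrix.diagonal_mul_diagonal]
    congr 1; congr 1; funext i; ring
  set c : Fin m → ℝ := star V *ᵥ o with hc
  have hoV : o ᵥ* V = c := by
    funext j
    simp [Matrix.vecMul, Matrix.mulVec, dotProduct, hc, Matrix.star_apply, ho, mul_comm]
  have hform : ∀ d : Fin m → ℝ,
      o ⬝ᵥ ((V * Matrix.diagonal d * star V) *ᵥ o) = ∑ i, d i * c i ^ 2 := by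
    intro d
    rw [← Matrix.mulVec_mulVec, ← Matrix.mulVec_mulVec, Matrix.dotProduct_mulVec, hoV, ← hc]
    simp only [Matrix.mulVec_diagonal, dotProduct]
    exact Finset.sum_congr rfl fun i _ => by ring
  have hnorm : ∑ i, c i ^ 2 = (m : ℝ) := by
    have h1 : o ⬝ᵥ ((V * Matrix.diagonal (fun _ => (1:ℝ)) * star V) *ᵥ o) = ∑ i, c i ^ 2 := by
      rw [hform]; simp
    have h2 : V * Matrix.diagonal (fun _ => (1:ℝ)) * star V = 1 := by
      rw [Matrix.diagonal_one, Matrix.mul_one, hV1]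
    rw [h2] at h1
    simp [Matrix.one_mulVec, dotProduct, ho] at h1
    rw [← h1]
  rw [hA3, hform]
  set μ := ⨆ i, hA.eigenvalues i with hμ
  have hle : ∀ i, hA.eigenvalues i ≤ μ := fun i =>
    le_ciSup (Set.Finite.bddAbove (Set.finite_range _)) i
  have h0 : ∀ i, 0 ≤ hA.eigenvalues i := fun i => hP.eigenvalues_nonneg i
  calc ∑ i, hA.eigenvalues i ^ 3 * c i ^ 2
      ≤ ∑ i, μ ^ 3 * c i ^ 2 := by
        refine Finset.sum_le_sum fun i _ => ?_
        exact mul_le_mul_of_nonneg_right (pow_le_pow_left₀ (h0 i) (hle i) 3) (sq_nonneg _)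
    _ = (m : ℝ) * μ ^ 3 := by rw [← Finset.mul_sum, hnorm]; ring

lemma lap_symm (hsym : ∀ i j, s i j = s j i) (i j : Fin n) :
    lapMat n G s i j = lapMat n G s j i := by
  simp only [lapMat, adjMat, Matrix.sub_apply, Matrix.diagonal]
  by_cases h : i = j
  · subst h; rfl
  · have h' : ¬ j = i := fun hh => h hh.symm
    simp only [Matrix.of_apply, if_neg h, if_neg h']
    exact congrArg (fun t => 0 - t) (if_congr (G.adj_comm i j) (hsym i j) rfl)


/-- λ_max(L(Σ)) ≥ n^{-1/3} (4 ∑_j d_j (d_j^-)² − 8 ∑_{e_ij} σ(e_ij) d_i^- d_j^-)^{1/3}. -/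
theorem stmt5 (n : ℕ) (hn : 0 < n) (G : SimpleGraph (Fin n)) [DecidableRel G.Adj]
    (s : Fin n → Fin n → ℝ) (hsym : ∀ i j, s i j = s j i)
    (hsgn : ∀ i j, G.Adj i j → s i j = 1 ∨ s i j = -1)
    (hL : (lapMat n G s).IsHermitian) :
    (4 * ∑ j, (G.degree j : ℝ) * (dNeg n G s j : ℝ) ^ 2 -
        8 * edgeSum n G (fun i j => s i j * (dNeg n G s i : ℝ) * (dNeg n G s j : ℝ)))
          ^ ((1 : ℝ) / 3) / (n : ℝ) ^ ((1 : ℝ) / 3) ≤ ⨆ i, hL.eigenvalues i := by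
  rw [show edgeSum n G (fun i j => s i j * (dNeg n G s i : ℝ) * (dNeg n G s j : ℝ))
      = (∑ i, ∑ j, if G.Adj i j then s i j * (dNeg n G s i : ℝ) * (dNeg n G s j : ℝ) else 0) / 2
      from rfl, ← mul_div_assoc]

  classical
  have hP : (lapMat n G s).PosSemidef := lap_posSemidef hsgn hL
  set o : Fin n → ℝ := fun _ => 1 with ho
  set u : Fin n → ℝ := fun j => 2 * (dNeg n G s j : ℝ) with hudef
  have hu : lapMat n G s *ᵥ o = u := funext fun j => lap_mulVec_ones hsgn j
  -- symmetry: o ᵥ* L = u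
  have hvec : ∀ w : Fin n → ℝ, o ⬝ᵥ (lapMat n G s *ᵥ w) = u ⬝ᵥ w := by
    intro w
    rw [Matrix.dotProduct_mulVec, ← hu]
    congr 1
    funext j
    simp only [Matrix.vecMul, Matrix.mulVec, dotProduct]
    exact Finset.sum_congr rfl fun i _ => by rw [lap_symm hsym j i]; ring
  have hX : o ⬝ᵥ ((lapMat n G s) ^ 3 *ᵥ o)
      = 4 * ∑ j, (G.degree j : ℝ) * (dNeg n G s j : ℝ) ^ 2 -
        8 * (∑ i, ∑ j, if G.Adj i j then (s i j * (dNeg n G s i : ℝ) * (dNeg n G s j : ℝ)) else 0) / 2 := by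
    have h3 : (lapMat n G s) ^ 3 *ᵥ o
        = lapMat n G s *ᵥ (lapMat n G s *ᵥ (lapMat n G s *ᵥ o)) := by
      rw [pow_succ, pow_two, Matrix.mulVec_mulVec, Matrix.mulVec_mulVec]
    rw [h3, hu, hvec, quad_form]
    have e2 : ∀ i j, (if G.Adj i j then s i j * u i * u j else 0)
        = 4 * (if G.Adj i j then s i j * (dNeg n G s i : ℝ) * (dNeg n G s j : ℝ) else 0) := by
      intro i j; by_cases h : G.Adj i j <;> simp [h, hudef] <;> ring
    have e3 : ∀ j, (G.degree j : ℝ) * u j ^ 2 = 4 * ((G.degree j : ℝ) * (dNeg n G s j : ℝ) ^ 2) := by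
      intro j; simp [hudef]; ring
    rw [Finset.sum_congr rfl fun j _ => e3 j]
    rw [Finset.sum_congr rfl fun i _ => Finset.sum_congr rfl fun j _ => e2 i j]
    simp only [← Finset.mul_sum]
    ring
  have hbound := spectral_cube_bound hn (lapMat n G s) hL hP
  have hX0 : 0 ≤ o ⬝ᵥ ((lapMat n G s) ^ 3 *ᵥ o) := by
    have := (hP.pow 3).dotProduct_mulVec_nonneg o
    rwa [star_trivial] at this
  set μ := ⨆ i, hL.eigenvalues i with hμdef
  have hμ0 : 0 ≤ μ := by
    have i0 : Fin n := ⟨0, hn⟩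
    exact le_trans (hP.eigenvalues_nonneg i0)
      (le_ciSup (Set.Finite.bddAbove (Set.finite_range _)) i0)
  rw [div_le_iff₀ (Real.rpow_pos_of_pos (by exact_mod_cast hn) _)]
  calc (4 * ∑ j, (G.degree j : ℝ) * (dNeg n G s j : ℝ) ^ 2 -
        8 * (∑ i, ∑ j, if G.Adj i j then (s i j * (dNeg n G s i : ℝ) * (dNeg n G s j : ℝ)) else 0) / 2)
          ^ ((1 : ℝ) / 3)
      ≤ ((n : ℝ) * μ ^ 3) ^ ((1 : ℝ) / 3) := by
        refine Real.rpow_le_rpow (by rw [← hX]; exact hX0) ?_ (by norm_num)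
        rw [← hX]; exact hbound
    _ = μ * (n : ℝ) ^ ((1 : ℝ) / 3) := by
        rw [Real.mul_rpow (by positivity) (by positivity)]
        rw [show (μ ^ 3 : ℝ) = μ ^ ((3 : ℕ) : ℝ) from (Real.rpow_natCast μ 3).symm,
          ← Real.rpow_mul hμ0]
        norm_num
        ring
end
end

section
/- Let Σ be a signed graph with b(Σ) ≤ n−2, where b(Σ) is the number of balanced components. Then λ_max(L(Σ)) ≥ √((s_1² − s_2 − s_1)/((n−b(Σ))(n−b(Σ)−1))), where s_p = ∑_j d_j^p. -/
open Matrix BigOperators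

noncomputable section

section Aux

/-- Trace of a Hermitian matrix is the sum of its eigenvalues. -/
lemma auxTrEig {n : ℕ} {A : Matrix (Fin n) (Fin n) ℝ} (hA : A.IsHermitian) :
    A.trace = ∑ i, hA.eigenvalues i := by
  conv_lhs => rw [hA.spectral_theorem, Unitary.conjStarAlgAut_apply]
  rw [Matrix.trace_mul_cycle]
  rw [show (star (hA.eigenvectorUnitary : Matrix (Fin n) (Fin n) ℝ)) *
      (hA.eigenvectorUnitary : Matrix (Fin n) (Fin n) ℝ) = 1 from
    (Matrix.mem_unitaryGroup_iff').mp hA.eigenvectorUnitary.2, one_mul, Matrix.trace_diagonal]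
  simp

/-- Trace of the square of a Hermitian matrix is the sum of squared eigenvalues. -/
lemma auxTrSqEig {n : ℕ} {A : Matrix (Fin n) (Fin n) ℝ} (hA : A.IsHermitian) :
    (A * A).trace = ∑ i, hA.eigenvalues i ^ 2 := by
  have hU : (star (hA.eigenvectorUnitary : Matrix (Fin n) (Fin n) ℝ)) *
      (hA.eigenvectorUnitary : Matrix (Fin n) (Fin n) ℝ) = 1 :=
    (Matrix.mem_unitaryGroup_iff').mp hA.eigenvectorUnitary.2
  conv_lhs => rw [hA.spectral_theorem, Unitary.conjStarAlgAut_apply]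
  rw [show ((hA.eigenvectorUnitary : Matrix (Fin n) (Fin n) ℝ) *
      diagonal (RCLike.ofReal ∘ hA.eigenvalues) * (star (hA.eigenvectorUnitary : Matrix (Fin n) (Fin n) ℝ))) *
      ((hA.eigenvectorUnitary : Matrix (Fin n) (Fin n) ℝ) *
      diagonal (RCLike.ofReal ∘ hA.eigenvalues) * (star (hA.eigenvectorUnitary : Matrix (Fin n) (Fin n) ℝ)))
      = (hA.eigenvectorUnitary : Matrix (Fin n) (Fin n) ℝ) *
      (diagonal (RCLike.ofReal ∘ hA.eigenvalues) * diagonal (RCLike.ofReal ∘ hA.eigenvalues)) *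
      (star (hA.eigenvectorUnitary : Matrix (Fin n) (Fin n) ℝ)) by
    simp only [mul_assoc]
    rw [← mul_assoc (star (hA.eigenvectorUnitary : Matrix (Fin n) (Fin n) ℝ)), hU, one_mul]]
  rw [Matrix.trace_mul_cycle, ← mul_assoc, hU, one_mul, diagonal_mul_diagonal,
    Matrix.trace_diagonal]
  simp [sq]

lemma auxDegSum (n : ℕ) (G : SimpleGraph (Fin n)) [DecidableRel G.Adj] (i : Fin n) :
    (G.degree i : ℝ) = ∑ j, if G.Adj i j then (1:ℝ) else 0 := by
  rw [SimpleGraph.degree, Finset.card_eq_sum_ones]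
  push_cast
  rw [SimpleGraph.neighborFinset_eq_filter, Finset.sum_filter]

lemma auxTrLap (n : ℕ) (G : SimpleGraph (Fin n)) [DecidableRel G.Adj] (s : Fin n → Fin n → ℝ) :
    (lapMat n G s).trace = ∑ j, (G.degree j : ℝ) := by
  unfold lapMat Matrix.trace
  simp only [Matrix.diag, Matrix.sub_apply]
  simp [adjMat, G.irrefl]

lemma auxTrLapSq (n : ℕ) (G : SimpleGraph (Fin n)) [DecidableRel G.Adj] (s : Fin n → Fin n → ℝ)
    (hsym : ∀ i j, s i j = s j i) (hsgn : ∀ i j, G.Adj i j → s i j = 1 ∨ s i j = -1) :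
    (lapMat n G s * lapMat n G s).trace
      = ∑ j, (G.degree j : ℝ) ^ 2 + ∑ j, (G.degree j : ℝ) := by
  unfold lapMat
  rw [Matrix.trace]
  simp only [Matrix.diag_apply, Matrix.mul_apply, Matrix.sub_apply, Matrix.diagonal_apply]
  simp only [adjMat]
  have key : ∀ i : Fin n, ∑ j, ((if i = j then (G.degree i : ℝ) else 0) - if G.Adj i j then s i j else 0) *
      ((if j = i then (G.degree j : ℝ) else 0) - if G.Adj j i then s j i else 0)
      = (G.degree i : ℝ)^2 + (G.degree i : ℝ) := by
    intro i
    have h1 : ∀ j, ((if i = j then (G.degree i : ℝ) else 0) - if G.Adj i j then s i j else 0) *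
        ((if j = i then (G.degree j : ℝ) else 0) - if G.Adj j i then s j i else 0)
        = (if i = j then (G.degree i : ℝ)^2 else 0) + (if G.Adj i j then (1:ℝ) else 0) := by
      intro j
      by_cases h : i = j
      · subst h; simp [G.irrefl, sq]
      · simp only [if_neg h, if_neg (Ne.symm h), zero_sub]
        by_cases ha : G.Adj i j
        · have ha' : G.Adj j i := ha.symm
          have hss : s i j * s j i = 1 := by
            rw [← hsym i j]; rcases hsgn i j ha with hs | hs <;> rw [hs] <;> norm_num
          simp only [if_pos ha, if_pos ha']
          nlinarith [hss]
        · have ha' : ¬ G.Adj j i := fun h' => ha h'.symm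
          simp [ha, ha']
    rw [Finset.sum_congr rfl (fun j _ => h1 j), Finset.sum_add_distrib, Finset.sum_ite_eq,
      if_pos (Finset.mem_univ i), ← auxDegSum]
  rw [Finset.sum_congr rfl (fun i _ => key i), Finset.sum_add_distrib]

lemma auxLapQuad (n : ℕ) (G : SimpleGraph (Fin n)) [DecidableRel G.Adj] (s : Fin n → Fin n → ℝ)
    (hsgn : ∀ i j, G.Adj i j → s i j = 1 ∨ s i j = -1) (x : Fin n → ℝ) :
    2 * (x ⬝ᵥ (lapMat n G s) *ᵥ x)
      = ∑ i, ∑ j, if G.Adj i j then (x i - s i j * x j)^2 else 0 := by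
  have e1 : x ⬝ᵥ (lapMat n G s) *ᵥ x
      = (∑ i, (G.degree i : ℝ) * x i ^ 2)
        - ∑ i, ∑ j, if G.Adj i j then s i j * (x i * x j) else 0 := by
    unfold lapMat
    simp only [dotProduct, mulVec, Matrix.sub_apply]
    simp only [adjMat]
    simp only [dotProduct, mulVec, Matrix.sub_apply, diagonal_apply, dotProduct, sub_mul, ite_mul,
      zero_mul, Finset.sum_sub_distrib, mul_sub, Finset.mul_sum]
    congr 1
    · congr 1; ext i
      rw [Finset.sum_eq_single i]
      · simp [sq]; ring
      · intro b _ hb; simp [Ne.symm hb]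
      · simp
    · congr 1; ext i; congr 1; ext j
      by_cases h : G.Adj i j <;> simp [h]; ring
  have e3 : ∑ i, ∑ j, (if G.Adj i j then (x i)^2 else 0) = ∑ i, (G.degree i : ℝ) * x i ^ 2 := by
    congr 1; ext i
    rw [auxDegSum, Finset.sum_mul]
    congr 1; ext j
    by_cases h : G.Adj i j <;> simp [h]
  have e4 : ∑ i, ∑ j, (if G.Adj i j then (x j)^2 else 0) = ∑ i, (G.degree i : ℝ) * x i ^ 2 := by
    rw [Finset.sum_comm, ← e3]
    congr 1; ext i; congr 1; ext j
    exact if_congr (G.adj_comm j i) rfl rfl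
  have e2 : ∑ i, ∑ j, (if G.Adj i j then (x i - s i j * x j)^2 else 0)
      = (∑ i, ∑ j, (if G.Adj i j then (x i)^2 else 0))
        + (∑ i, ∑ j, (if G.Adj i j then (x j)^2 else 0))
        - 2 * ∑ i, ∑ j, (if G.Adj i j then s i j * (x i * x j) else 0) := by
    rw [Finset.mul_sum, ← Finset.sum_add_distrib, ← Finset.sum_sub_distrib]
    congr 1; ext i
    rw [Finset.mul_sum, ← Finset.sum_add_distrib, ← Finset.sum_sub_distrib]
    congr 1; ext j
    by_cases h : G.Adj i j
    · have hs : s i j ^ 2 = 1 := by rcases hsgn i j h with h' | h' <;> rw [h'] <;> norm_num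
      simp only [if_pos h]; nlinarith [hs]
    · simp [h]
  rw [e1, e2, e3, e4]; ring

lemma auxLapPsd (n : ℕ) (G : SimpleGraph (Fin n)) [DecidableRel G.Adj] (s : Fin n → Fin n → ℝ)
    (hsgn : ∀ i j, G.Adj i j → s i j = 1 ∨ s i j = -1)
    (hL : (lapMat n G s).IsHermitian) : (lapMat n G s).PosSemidef := by
  refine Matrix.PosSemidef.of_dotProduct_mulVec_nonneg hL (fun x => ?_)
  have hq := auxLapQuad n G s hsgn x
  have h0 : (0:ℝ) ≤ ∑ i, ∑ j, if G.Adj i j then (x i - s i j * x j)^2 else 0 := by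
    apply Finset.sum_nonneg; intro i _; apply Finset.sum_nonneg; intro j _
    positivity
  simp only [star_trivial]
  linarith

lemma auxRankLe (n : ℕ) (G : SimpleGraph (Fin n)) [DecidableRel G.Adj] (s : Fin n → Fin n → ℝ) :
    (lapMat n G s).rank + numBalanced n G s ≤ n := by
  classical
  set B := {c : G.ConnectedComponent //
    ∃ θ : Fin n → ℝ, (∀ v, θ v = 1 ∨ θ v = -1) ∧
      ∀ i j, G.Adj i j → G.connectedComponentMk i = c → s i j = θ i * θ j} with hB
  have : Finite B := by
    have : Finite G.ConnectedComponent := Quot.finite _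
    exact Subtype.finite
  letI : Fintype B := Fintype.ofFinite B
  set v : B → (Fin n → ℝ) := fun c i =>
    if G.connectedComponentMk i = c.1 then (c.2).choose i else 0 with hv
  have hθ1 : ∀ c : B, ∀ w, (c.2).choose w = 1 ∨ (c.2).choose w = -1 := fun c => (c.2).choose_spec.1
  have hθ2 : ∀ c : B, ∀ i j, G.Adj i j → G.connectedComponentMk i = c.1 →
      s i j = (c.2).choose i * (c.2).choose j := fun c => (c.2).choose_spec.2
  have hθsq : ∀ c : B, ∀ w, (c.2).choose w ^ 2 = 1 := by
    intro c w; rcases hθ1 c w with h | h <;> rw [h] <;> norm_num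
  have hker : ∀ c : B, (lapMat n G s).mulVec (v c) = 0 := by
    intro c
    funext i
    have hvc : ∀ j, G.Adj i j → v c j = if G.connectedComponentMk i = c.1 then (c.2).choose j else 0 := by
      intro j hadj
      have : G.connectedComponentMk j = G.connectedComponentMk i :=
        (SimpleGraph.ConnectedComponent.connectedComponentMk_eq_of_adj hadj).symm
      simp only [hv, this]
    have expand : (lapMat n G s).mulVec (v c) i
        = (G.degree i : ℝ) * v c i - ∑ j, if G.Adj i j then s i j * v c j else 0 := by
      unfold lapMat
      simp only [mulVec, dotProduct, Matrix.sub_apply]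
      simp only [adjMat]
      simp only [mulVec, dotProduct, Matrix.sub_apply, diagonal_apply, sub_mul, ite_mul, zero_mul,
        Finset.sum_sub_distrib]
      congr 1
      rw [Finset.sum_eq_single i]
      · simp
      · intro b _ hb; simp [Ne.symm hb]
      · simp
    rw [expand]
    by_cases hi : G.connectedComponentMk i = c.1
    · have : ∀ j, (if G.Adj i j then s i j * v c j else 0)
          = (if G.Adj i j then (1:ℝ) else 0) * (c.2).choose i := by
        intro j
        by_cases hadj : G.Adj i j
        · rw [if_pos hadj, if_pos hadj, hvc j hadj, if_pos hi, hθ2 c i j hadj hi, one_mul]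
          linear_combination ((c.2).choose i) * hθsq c j
        · simp [hadj]
      rw [Finset.sum_congr rfl (fun j _ => this j), ← Finset.sum_mul, ← auxDegSum n G i]
      simp only [hv, if_pos hi, Pi.zero_apply]
      ring
    · have : ∀ j, (if G.Adj i j then s i j * v c j else 0) = 0 := by
        intro j
        by_cases hadj : G.Adj i j
        · rw [if_pos hadj, hvc j hadj, if_neg hi, mul_zero]
        · simp [hadj]
      rw [Finset.sum_congr rfl (fun j _ => this j)]
      simp only [hv, if_neg hi, Pi.zero_apply]
      simp
  have hli : LinearIndependent ℝ v := by
    rw [Fintype.linearIndependent_iff]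
    intro g hg c
    obtain ⟨i, hi⟩ := c.1.exists_rep
    have hi' : G.connectedComponentMk i = c.1 := hi
    have hgi := congrFun hg i
    simp only [Finset.sum_apply, Pi.smul_apply, smul_eq_mul, Pi.zero_apply] at hgi
    rw [Finset.sum_eq_single c] at hgi
    · simp only [hv, if_pos hi'] at hgi
      rcases hθ1 c i with h | h <;> rw [h] at hgi <;> linarith
    · intro b _ hb
      have : G.connectedComponentMk i ≠ b.1 := by
        rw [hi']; exact fun h => hb (Subtype.ext h.symm)
      simp [hv, this]
    · simp
  have hli' : LinearIndependent ℝ (fun c : B =>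
      (⟨v c, by rw [LinearMap.mem_ker, mulVecLin_apply, hker c]⟩ :
        LinearMap.ker (lapMat n G s).mulVecLin)) := by
    apply LinearIndependent.of_comp (LinearMap.ker (lapMat n G s).mulVecLin).subtype
    exact hli
  have hcard : Fintype.card B ≤ Module.finrank ℝ (LinearMap.ker (lapMat n G s).mulVecLin) :=
    hli'.fintype_card_le_finrank
  have hrn := LinearMap.finrank_range_add_finrank_ker (lapMat n G s).mulVecLin
  rw [Module.finrank_pi] at hrn
  have hnum : numBalanced n G s = Fintype.card B := Nat.card_eq_fintype_card
  rw [Matrix.rank, hnum]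
  simp only [Fintype.card_fin] at hrn
  omega

end Aux

/-- λ_max(L(Σ)) ≥ √((s₁² − s₂ − s₁)/((n−b)(n−b−1))) when b(Σ) ≤ n−2. -/
theorem stmt10 (n : ℕ) (G : SimpleGraph (Fin n)) [DecidableRel G.Adj]
    (s : Fin n → Fin n → ℝ) (hsym : ∀ i j, s i j = s j i)
    (hsgn : ∀ i j, G.Adj i j → s i j = 1 ∨ s i j = -1)
    (hb : numBalanced n G s + 2 ≤ n)
    (hL : (lapMat n G s).IsHermitian) :
    Real.sqrt (((∑ j, (G.degree j : ℝ)) ^ 2 - ∑ j, (G.degree j : ℝ) ^ 2 -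
        ∑ j, (G.degree j : ℝ)) /
      (((n : ℝ) - numBalanced n G s) * ((n : ℝ) - numBalanced n G s - 1))) ≤
      ⨆ i, hL.eigenvalues i := by
  classical
  set lam : Fin n → ℝ := hL.eigenvalues with hlam
  set M : ℝ := ⨆ i, lam i with hM
  set b : ℕ := numBalanced n G s with hbdef
  set r : ℕ := n - b with hrdef
  have hbn : b ≤ n := by omega
  have hr2 : 2 ≤ r := by omega
  have hn0 : 0 < n := by omega
  have hpsd : (lapMat n G s).PosSemidef := auxLapPsd n G s hsgn hL
  have hnn : ∀ i, 0 ≤ lam i := fun i => hpsd.eigenvalues_nonneg i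
  have hMle : ∀ i, lam i ≤ M := fun i => le_ciSup (Set.Finite.bddAbove (Set.finite_range lam)) i
  have hM0 : 0 ≤ M := le_trans (hnn ⟨0, hn0⟩) (hMle ⟨0, hn0⟩)
  -- trace identities
  have t1 : ∑ i, lam i = ∑ j, (G.degree j : ℝ) := by
    rw [← auxTrEig hL, auxTrLap]
  have t2 : ∑ i, lam i ^ 2 = ∑ j, (G.degree j : ℝ) ^ 2 + ∑ j, (G.degree j : ℝ) := by
    rw [← auxTrSqEig hL, auxTrLapSq n G s hsym hsgn]
  -- the set of nonzero eigenvalues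
  set S : Finset (Fin n) := Finset.univ.filter (fun i => lam i ≠ 0) with hS
  have hScard : S.card ≤ r := by
    have h1 : (lapMat n G s).rank = Fintype.card {i // lam i ≠ 0} :=
      hL.rank_eq_card_non_zero_eigs
    have h2 : Fintype.card {i // lam i ≠ 0} = S.card := Fintype.card_subtype _
    have h3 := auxRankLe n G s
    omega
  -- the key sum bound
  have key : (∑ i, lam i)^2 - ∑ i, lam i ^ 2 ≤ ((r * (r-1) : ℕ) : ℝ) * M^2 := by
    have e : (∑ i, lam i)^2 - ∑ i, lam i ^ 2
        = ∑ i, ∑ j ∈ Finset.univ.erase i, lam i * lam j := by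
      rw [sq, Finset.sum_mul_sum, ← Finset.sum_sub_distrib]
      refine Finset.sum_congr rfl (fun i _ => ?_)
      have h := Finset.add_sum_erase Finset.univ (fun j => lam i * lam j) (Finset.mem_univ i)
      rw [← h]; ring
    have einner : ∀ i, ∑ j ∈ S.erase i, lam i * lam j
        = ∑ j ∈ Finset.univ.erase i, lam i * lam j := by
      intro i
      apply Finset.sum_subset (Finset.erase_subset_erase _ (Finset.subset_univ S))
      intro j hj hjS
      have hlj : lam j = 0 := by
        by_contra h
        exact hjS (Finset.mem_erase.mpr ⟨(Finset.mem_erase.mp hj).1,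
          Finset.mem_filter.mpr ⟨Finset.mem_univ j, h⟩⟩)
      rw [hlj, mul_zero]
    have eouter : ∑ i ∈ S, ∑ j ∈ S.erase i, lam i * lam j
        = ∑ i, ∑ j ∈ Finset.univ.erase i, lam i * lam j := by
      rw [show (∑ i ∈ S, ∑ j ∈ S.erase i, lam i * lam j)
          = ∑ i ∈ S, ∑ j ∈ Finset.univ.erase i, lam i * lam j from
        Finset.sum_congr rfl (fun i _ => einner i)]
      apply Finset.sum_subset (Finset.subset_univ S)
      intro i _ hiS
      have hli : lam i = 0 := by
        by_contra h
        exact hiS (Finset.mem_filter.mpr ⟨Finset.mem_univ i, h⟩)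
      apply Finset.sum_eq_zero
      intro j _
      rw [hli, zero_mul]
    rw [e, ← eouter]
    have hbound : ∀ i ∈ S, ∑ j ∈ S.erase i, lam i * lam j ≤ ((S.card - 1 : ℕ) : ℝ) * M^2 := by
      intro i hiS
      have := Finset.sum_le_card_nsmul (S.erase i) (fun j => lam i * lam j) (M^2)
        (fun j _ => by
          simpa [sq] using mul_le_mul (hMle i) (hMle j) (hnn j) hM0)
      rw [Finset.card_erase_of_mem hiS] at this
      simpa [nsmul_eq_mul] using this
    calc ∑ i ∈ S, ∑ j ∈ S.erase i, lam i * lam j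
        ≤ ∑ _i ∈ S, ((S.card - 1 : ℕ) : ℝ) * M^2 := Finset.sum_le_sum hbound
      _ = (S.card : ℝ) * (((S.card - 1 : ℕ) : ℝ) * M^2) := by
          rw [Finset.sum_const, nsmul_eq_mul]
      _ ≤ ((r * (r-1) : ℕ) : ℝ) * M^2 := by
          have h1 : (S.card * (S.card - 1) : ℕ) ≤ (r * (r - 1) : ℕ) :=
            Nat.mul_le_mul hScard (Nat.sub_le_sub_right hScard 1)
          have h2 : ((S.card * (S.card - 1) : ℕ) : ℝ) ≤ ((r * (r-1) : ℕ) : ℝ) := by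
            exact_mod_cast h1
          have hM2 : 0 ≤ M^2 := sq_nonneg M
          push_cast at h2 ⊢
          nlinarith [h2, hM2]
  -- denominators
  have hcast1 : ((n : ℝ) - b) = (r : ℕ) := by
    rw [hrdef]; push_cast [Nat.cast_sub hbn]; ring
  have hcast2 : ((n : ℝ) - b - 1) = ((r - 1 : ℕ) : ℝ) := by
    rw [hrdef]; push_cast [Nat.cast_sub hbn, Nat.cast_sub (show 1 ≤ n - b by omega)]; ring
  have hDpos : 0 < ((n : ℝ) - b) * ((n : ℝ) - b - 1) := by
    rw [hcast2, hcast1]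
    have h2r : (2:ℝ) ≤ ((r:ℕ) : ℝ) := by exact_mod_cast hr2
    have h1r : (1:ℝ) ≤ ((r - 1 : ℕ) : ℝ) := by
      have : 1 ≤ r - 1 := by omega
      exact_mod_cast this
    nlinarith
  have hdiv : ((∑ j, (G.degree j : ℝ)) ^ 2 - ∑ j, (G.degree j : ℝ) ^ 2 - ∑ j, (G.degree j : ℝ)) /
      (((n : ℝ) - b) * ((n : ℝ) - b - 1)) ≤ M^2 := by
    rw [div_le_iff₀ hDpos]
    have hnum : (∑ j, (G.degree j : ℝ)) ^ 2 - ∑ j, (G.degree j : ℝ) ^ 2 - ∑ j, (G.degree j : ℝ)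
        = (∑ i, lam i)^2 - ∑ i, lam i ^ 2 := by
      rw [t1, t2]; ring
    have hden : ((n : ℝ) - b) * ((n : ℝ) - b - 1) = ((r * (r-1) : ℕ) : ℝ) := by
      rw [hcast2, hcast1]; exact (Nat.cast_mul r (r-1)).symm
    rw [hnum, hden]
    nlinarith [key]
  calc Real.sqrt (((∑ j, (G.degree j : ℝ)) ^ 2 - ∑ j, (G.degree j : ℝ) ^ 2 -
        ∑ j, (G.degree j : ℝ)) / (((n : ℝ) - b) * ((n : ℝ) - b - 1)))
      ≤ Real.sqrt (M^2) := Real.sqrt_le_sqrt hdiv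
    _ = M := Real.sqrt_sq hM0
end
end
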